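/- Let $f: \mathbb{R} \to \mathbb{C}$ be a Schwartz function, and define $g(y) = |y|^{-1} f(y^{-1})$ for $y \neq 0$. If $f$ vanishes to infinite order at $0$ (all derivatives vanish at $0$), then $g$ extends to a Schwartz function on $\mathbb{R}$ (setting $g(0) = 0$). -/

import Mathlib

/-!
Put `g φ m x = sign x · x⁻ᵐ · φ(x⁻¹)`, which vanishes at `0`; the function in question is
`g f 1`. Away from `0`, `(g φ m)' = -m · g φ (m+1) - g φ' (m+2)`, and at `0` every `g φ m` is
`O(x²)` by the decay of `φ` at infinity, so the same formula holds there with both sides `0`.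
Hence the real span of the `g φ m`, with `φ` Schwartz and flat at `0`, is stable under
differentiation, and its elements are smooth. They also decay rapidly: for `|x| ≤ 1` this is
the decay of `φ` at infinity, and for `|x| ≥ 1` the flatness of `φ` at `0`, which by the mean
value theorem gives `‖φ u‖ ≤ C |u|ᵖ` for every `p`.
-/

open Topology

namespace Real

theorem sign_eventuallyEq_const {x : ℝ} (hx : x ≠ 0) :
    sign =ᶠ[𝓝 x] fun _ => sign x := by
  rcases hx.lt_or_gt with hx | hx
  · filter_upwards [Iio_mem_nhds hx] with y hy
    rw [sign_of_neg hy, sign_of_neg hx]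
  · filter_upwards [Ioi_mem_nhds hx] with y hy
    rw [sign_of_pos hy, sign_of_pos hx]

theorem hasDerivAt_sign_mul_inv_pow {x : ℝ} (hx : x ≠ 0) (m : ℕ) :
    HasDerivAt (fun y => sign y * y⁻¹ ^ m) (-m * (sign x * x⁻¹ ^ (m + 1))) x := by
  have h := ((hasDerivAt_inv hx).pow m).const_mul (sign x)
  refine (h.congr_deriv ?_).congr_of_eventuallyEq ?_
  · rcases m with _ | m
    · simp
    · simp only [Nat.add_sub_cancel, Nat.cast_add, Nat.cast_one]
      ring
  · filter_upwards [sign_eventuallyEq_const hx] with y hy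
    rw [hy, Pi.pow_apply]

theorem sign_mul_inv (x : ℝ) : sign x * x⁻¹ = |x|⁻¹ := by
  rcases lt_trichotomy x 0 with h | rfl | h
  · rw [sign_of_neg h, abs_of_neg h, inv_neg, neg_one_mul]
  · simp
  · rw [sign_of_pos h, abs_of_pos h, one_mul]

end Real

namespace SchwartzMap

variable {E : Type*} [NormedAddCommGroup E] [NormedSpace ℝ E]

theorem iteratedDeriv_derivCLM (φ : 𝓢(ℝ, E)) (n : ℕ) :
    iteratedDeriv n (derivCLM ℝ E φ) = iteratedDeriv (n + 1) φ := by
  rw [iteratedDeriv_succ']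
  rfl

theorem exists_norm_le_mul_abs_pow_of_iteratedDeriv_eq_zero (φ : 𝓢(ℝ, E))
    (hφ : ∀ n, iteratedDeriv n φ 0 = 0) (p : ℕ) : ∃ C, ∀ u, ‖φ u‖ ≤ C * |u| ^ p := by
  induction p generalizing φ with
  | zero => exact ⟨SchwartzMap.seminorm ℝ 0 0 φ, fun u => by simpa using norm_le_seminorm ℝ φ u⟩
  | succ p ih =>
    obtain ⟨C, hC⟩ := ih (derivCLM ℝ E φ) fun n => by rw [iteratedDeriv_derivCLM]; exact hφ _
    refine ⟨C, fun u => ?_⟩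
    have hφ0 : φ 0 = 0 := by simpa using hφ 0
    have hmvt : ‖φ u - φ 0‖ ≤ C * |u| ^ p * ‖u - 0‖ := by
      refine (convex_closedBall (0 : ℝ) |u|).norm_image_sub_le_of_norm_deriv_le
        (fun _ _ => φ.differentiableAt) (fun t ht => ?_) (by simp) (by simp)
      calc ‖deriv φ t‖ = ‖derivCLM ℝ E φ t‖ := rfl
        _ ≤ C * |t| ^ p := hC t
        _ ≤ C * |u| ^ p := by
          have htu : |t| ≤ |u| := by simpa using ht
          have hC0 : 0 ≤ C := by simpa using (norm_nonneg _).trans (hC 1)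
          gcongr
    rwa [hφ0, sub_zero, sub_zero, Real.norm_eq_abs, mul_assoc, ← pow_succ] at hmvt

noncomputable def inversionTerm (φ : 𝓢(ℝ, E)) (m : ℕ) (x : ℝ) : E :=
  (Real.sign x * x⁻¹ ^ m) • φ x⁻¹

@[simp]
theorem inversionTerm_zero (φ : 𝓢(ℝ, E)) (m : ℕ) : inversionTerm φ m 0 = 0 := by
  simp [inversionTerm]

theorem norm_inversionTerm_le (φ : 𝓢(ℝ, E)) (m : ℕ) (x : ℝ) :
    ‖inversionTerm φ m x‖ ≤ |x⁻¹| ^ m * ‖φ x⁻¹‖ := by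
  rw [inversionTerm, norm_smul, norm_mul, norm_pow, Real.norm_eq_abs, Real.norm_eq_abs]
  rcases Real.sign_apply_eq x with h | h | h <;> simp [h]; positivity

theorem norm_inversionTerm_le_mul_sq (φ : 𝓢(ℝ, E)) (m : ℕ) (x : ℝ) :
    ‖inversionTerm φ m x‖ ≤ SchwartzMap.seminorm ℝ (m + 2) 0 φ * |x| ^ 2 := by
  rcases eq_or_ne x 0 with rfl | hx
  · simp
  calc ‖inversionTerm φ m x‖ ≤ |x⁻¹| ^ m * ‖φ x⁻¹‖ := norm_inversionTerm_le φ m x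
    _ = |x⁻¹| ^ (m + 2) * ‖φ x⁻¹‖ * |x| ^ 2 := by
      have h : |x⁻¹| ^ 2 * |x| ^ 2 = 1 := by
        rw [← mul_pow, abs_inv, inv_mul_cancel₀ (abs_ne_zero.2 hx), one_pow]
      linear_combination (-(|x⁻¹| ^ m * ‖φ x⁻¹‖)) * h
    _ ≤ SchwartzMap.seminorm ℝ (m + 2) 0 φ * |x| ^ 2 := by
      gcongr
      simpa using norm_pow_mul_le_seminorm ℝ φ (m + 2) x⁻¹

theorem hasDerivAt_inversionTerm (φ : 𝓢(ℝ, E)) (m : ℕ) (x : ℝ) :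
    HasDerivAt (inversionTerm φ m)
      (-(m : ℝ) • inversionTerm φ (m + 1) x - inversionTerm (derivCLM ℝ E φ) (m + 2) x) x := by
  rcases eq_or_ne x 0 with rfl | hx
  · have hO : inversionTerm φ m =O[𝓝 0] fun x => ‖x - 0‖ ^ 2 :=
      .of_bound _ (.of_forall fun x => by simpa using norm_inversionTerm_le_mul_sq φ m x)
    simpa using (hO.hasFDerivAt one_lt_two).hasDerivAt
  · have hcomp : HasDerivAt (fun y => φ y⁻¹) ((-(x ^ 2)⁻¹) • deriv φ x⁻¹) x :=
      (φ.hasDerivAt x⁻¹).scomp x (hasDerivAt_inv hx)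
    refine ((Real.hasDerivAt_sign_mul_inv_pow hx m).smul hcomp).congr_deriv ?_
    simp only [inversionTerm, derivCLM_apply]
    module

theorem exists_abs_pow_mul_norm_inversionTerm_le (φ : 𝓢(ℝ, E))
    (hφ : ∀ n, iteratedDeriv n φ 0 = 0) (m k : ℕ) :
    ∃ C, ∀ x, |x| ^ k * ‖inversionTerm φ m x‖ ≤ C := by
  obtain ⟨C, hC⟩ := exists_norm_le_mul_abs_pow_of_iteratedDeriv_eq_zero φ hφ k
  refine ⟨max (SchwartzMap.seminorm ℝ m 0 φ) C, fun x => ?_⟩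
  grw [norm_inversionTerm_le]
  rcases le_total |x| 1 with hx | hx
  · calc |x| ^ k * (|x⁻¹| ^ m * ‖φ x⁻¹‖) ≤ 1 * (|x⁻¹| ^ m * ‖φ x⁻¹‖) := by
          gcongr; exact pow_le_one₀ (abs_nonneg x) hx
      _ ≤ SchwartzMap.seminorm ℝ m 0 φ := by simpa using norm_pow_mul_le_seminorm ℝ φ m x⁻¹
      _ ≤ _ := le_max_left _ _
  · have hx0 : x ≠ 0 := by rintro rfl; norm_num at hx
    calc |x| ^ k * (|x⁻¹| ^ m * ‖φ x⁻¹‖) ≤ |x| ^ k * (1 * (C * |x⁻¹| ^ k)) := by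
          gcongr
          · exact pow_le_one₀ (abs_nonneg _) (by rw [abs_inv]; exact inv_le_one_of_one_le₀ hx)
          · exact hC x⁻¹
      _ = C := by rw [abs_inv, inv_pow]; field_simp
      _ ≤ _ := le_max_right _ _

variable (E) in
def flatInversionTerms : Set (ℝ → E) :=
  {ψ | ∃ φ : 𝓢(ℝ, E), (∀ n, iteratedDeriv n φ 0 = 0) ∧ ∃ m, ψ = inversionTerm φ m}

theorem exists_hasDerivAt_of_mem_span {ψ : ℝ → E}
    (hψ : ψ ∈ Submodule.span ℝ (flatInversionTerms E)) :
    ∃ ψ' ∈ Submodule.span ℝ (flatInversionTerms E), ∀ x, HasDerivAt ψ (ψ' x) x := by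
  induction hψ using Submodule.span_induction with
  | mem ψ hψ =>
    obtain ⟨φ, hφ, m, rfl⟩ := hψ
    have hφ' : ∀ n, iteratedDeriv n (derivCLM ℝ E φ) 0 = 0 := fun n => by
      rw [iteratedDeriv_derivCLM]; exact hφ _
    refine ⟨-(m : ℝ) • inversionTerm φ (m + 1) - inversionTerm (derivCLM ℝ E φ) (m + 2),
      sub_mem (Submodule.smul_mem _ _ (Submodule.subset_span ⟨φ, hφ, m + 1, rfl⟩))
        (Submodule.subset_span ⟨_, hφ', m + 2, rfl⟩), hasDerivAt_inversionTerm φ m⟩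
  | zero => exact ⟨0, zero_mem _, fun _ => hasDerivAt_const _ _⟩
  | add ψ χ _ _ hψ hχ =>
    obtain ⟨ψ', hψ'S, hψ'⟩ := hψ
    obtain ⟨χ', hχ'S, hχ'⟩ := hχ
    exact ⟨ψ' + χ', add_mem hψ'S hχ'S, fun x => (hψ' x).add (hχ' x)⟩
  | smul c ψ _ hψ =>
    obtain ⟨ψ', hψ'S, hψ'⟩ := hψ
    exact ⟨c • ψ', Submodule.smul_mem _ c hψ'S, fun x => (hψ' x).const_smul c⟩

theorem iteratedDeriv_mem_span {ψ : ℝ → E} (hψ : ψ ∈ Submodule.span ℝ (flatInversionTerms E))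
    (n : ℕ) : iteratedDeriv n ψ ∈ Submodule.span ℝ (flatInversionTerms E) := by
  induction n with
  | zero => rwa [iteratedDeriv_zero]
  | succ n ih =>
    obtain ⟨ψ', hψ'S, hψ'⟩ := exists_hasDerivAt_of_mem_span ih
    rwa [iteratedDeriv_succ, funext fun x => (hψ' x).deriv]

theorem exists_abs_pow_mul_norm_le_of_mem_span {ψ : ℝ → E}
    (hψ : ψ ∈ Submodule.span ℝ (flatInversionTerms E)) (k : ℕ) :
    ∃ C, ∀ x, |x| ^ k * ‖ψ x‖ ≤ C := by
  induction hψ using Submodule.span_induction with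
  | mem ψ hψ =>
    obtain ⟨φ, hφ, m, rfl⟩ := hψ
    exact exists_abs_pow_mul_norm_inversionTerm_le φ hφ m k
  | zero => exact ⟨0, fun _ => by simp⟩
  | add ψ χ _ _ hψ hχ =>
    obtain ⟨C, hC⟩ := hψ
    obtain ⟨D, hD⟩ := hχ
    refine ⟨C + D, fun x => ?_⟩
    grw [Pi.add_apply, norm_add_le, mul_add, hC, hD]
  | smul c ψ _ hψ =>
    obtain ⟨C, hC⟩ := hψ
    refine ⟨‖c‖ * C, fun x => ?_⟩
    rw [Pi.smul_apply, norm_smul, mul_left_comm]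
    gcongr
    exact hC x

theorem exists_schwartzMap_of_mem_span {ψ : ℝ → E}
    (hψ : ψ ∈ Submodule.span ℝ (flatInversionTerms E)) : ∃ g : 𝓢(ℝ, E), ⇑g = ψ := by
  have hdiff (n : ℕ) : Differentiable ℝ (iteratedDeriv n ψ) := fun x =>
    let ⟨_, _, h⟩ := exists_hasDerivAt_of_mem_span (iteratedDeriv_mem_span hψ n)
    (h x).differentiableAt
  refine ⟨⟨ψ, contDiff_of_differentiable_iteratedDeriv fun n _ => hdiff n, fun k n => ?_⟩, rfl⟩
  simpa only [norm_iteratedFDeriv_eq_norm_iteratedDeriv, Real.norm_eq_abs] using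
    exists_abs_pow_mul_norm_le_of_mem_span (iteratedDeriv_mem_span hψ n) k

end SchwartzMap

/-- If `f` is a Schwartz function on `ℝ` vanishing to infinite order at `0`, then
`g(y) = |y|⁻¹ f(y⁻¹)` (with `g(0) = 0`) extends to a Schwartz function on `ℝ`. -/
theorem inversion_preserves_schwartz (f : SchwartzMap ℝ ℂ)
    (hf : ∀ n : ℕ, iteratedDeriv n (fun x => f x) 0 = 0) :
    ∃ g : SchwartzMap ℝ ℂ, g 0 = 0 ∧
      ∀ y : ℝ, y ≠ 0 → g y = (|y|⁻¹ : ℝ) • f y⁻¹ := by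
  obtain ⟨g, hg⟩ := SchwartzMap.exists_schwartzMap_of_mem_span
    (Submodule.subset_span ⟨f, hf, 1, rfl⟩)
  refine ⟨g, by simp [hg], fun y _ => ?_⟩
  rw [hg, SchwartzMap.inversionTerm, pow_one, Real.sign_mul_inv]
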